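/- arXiv:0903.1689 — 4 statements merged into one kernel-verified Lean document; each statement's English description precedes it below -/
import Mathlib

section
/- The set T(t) of twin Laurent polynomials is a (non-commutative) subring of L: it contains 0 and 1 (the constant polynomial I), and is closed under addition, negation, and multiplication. -/
/-- The image of (123) under the irreducible 3-dimensional integral representation of A₄. -/
def Xm : Matrix (Fin 3) (Fin 3) ℤ := !![-1, 1, 0; -1, 0, 0; -1, 0, 1]

/-- The image of (142) under the irreducible 3-dimensional integral representation of A₄. -/
def Ym : Matrix (Fin 3) (Fin 3) ℤ := !![0, 0, -1; 0, 1, -1; 1, 0, -1]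

/-- The inverse of `Xm`, which equals `Xm ^ 2`. -/
def Xinv : Matrix (Fin 3) (Fin 3) ℤ := Xm ^ 2

/-- The inverse of `Ym`, which equals `Ym ^ 2`. -/
def Yinv : Matrix (Fin 3) (Fin 3) ℤ := Ym ^ 2

open LaurentPolynomial Finset

/-- 3×3 integer matrices. -/
abbrev M3 : Type := Matrix (Fin 3) (Fin 3) ℤ

/-- Laurent polynomials in `t` with coefficients in `M3`. -/
abbrev L : Type := LaurentPolynomial M3

/-- A Laurent polynomial `f = ∑ d_j t^j` with 3×3 integer matrix coefficients is *twin* if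
`d_j = c_j I + c_j' (XYX)` for `j ≡ 0 (mod 3)`, `d_j = a_j (X+Y)` for `j ≡ 1 (mod 3)`,
`d_j = b_j (X⁻¹+Y⁻¹)` for `j ≡ 2 (mod 3)`, and `a_{3j+1} = b_{3j+2}` for all `j`. -/
def IsTwin (f : L) : Prop :=
  ∃ c c' a b : ℤ → ℤ,
    (∀ j : ℤ, j % 3 = 0 → f.coeff j = c j • (1 : M3) + c' j • (Xm * Ym * Xm)) ∧
    (∀ j : ℤ, j % 3 = 1 → f.coeff j = a j • (Xm + Ym)) ∧
    (∀ j : ℤ, j % 3 = 2 → f.coeff j = b j • (Xinv + Yinv)) ∧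
    (∀ j : ℤ, a (3 * j + 1) = b (3 * j + 2))

/-!
Write `R = XYX`, `P = X + Y`, `Q = X⁻¹ + Y⁻¹` and `g = P t + Q t²`. A twin polynomial is exactly a
`ℤ`-linear combination of `t^{3n}`, `R t^{3n}` and `g t^{3n}`, so the twin polynomials form the
`ℤ`-span of these elements. Since `t` is central, this span is closed under multiplication as soon
as the products of `1, R, g` lie in it, and the matrix identities `R² = 1`, `RP = PR = -P`,
`RQ = QR = -Q`, `P² = Q² = 0`, `PQ + QP = 2 - 2R` give `Rg = gR = -g` and `g² = (2 - 2R) t³`.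
-/

namespace LaurentPolynomial

variable {R : Type*} [Semiring R]

theorem coeff_C_mul_T (a : R) (n k : ℤ) : (C a * T n).coeff k = if n = k then a else 0 := by
  rw [← single_eq_C_mul_T, AddMonoidAlgebra.coeff_single, Finsupp.single_apply]

theorem C_mul_T_mul_C_mul_T (a b : R) (m n : ℤ) :
    C a * T m * (C b * T n) = C (a * b) * T (m + n) := by
  simp only [← single_eq_C_mul_T, AddMonoidAlgebra.single_mul_single]

theorem C_neg_mul_T {R : Type*} [Ring R] (a : R) (n : ℤ) : C (-a) * T n = -(C a * T n) := by
  rw [map_neg, neg_mul]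

end LaurentPolynomial

open scoped Pointwise in
theorem Submodule.mul_mem_span_of_mul_subset {R A : Type*} [CommSemiring R] [Semiring A]
    [Algebra R A] {S : Set A} (hS : S * S ⊆ span R S) {x y : A} (hx : x ∈ span R S)
    (hy : y ∈ span R S) : x * y ∈ span R S :=
  span_le.2 hS (span_mul_span R S S ▸ mul_mem_mul hx hy)

def XYX : M3 := Xm * Ym * Xm
def XaddY : M3 := Xm + Ym
def XinvAddYinv : M3 := Xinv + Yinv

theorem XYX_mul_XYX : XYX * XYX = 1 := by decide
theorem XYX_mul_XaddY : XYX * XaddY = -XaddY := by decide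
theorem XaddY_mul_XYX : XaddY * XYX = -XaddY := by decide
theorem XYX_mul_XinvAddYinv : XYX * XinvAddYinv = -XinvAddYinv := by decide
theorem XinvAddYinv_mul_XYX : XinvAddYinv * XYX = -XinvAddYinv := by decide
theorem XaddY_mul_XaddY : XaddY * XaddY = 0 := by decide
theorem XinvAddYinv_mul_XinvAddYinv : XinvAddYinv * XinvAddYinv = 0 := by decide
theorem XaddY_mul_XinvAddYinv_add :
    XaddY * XinvAddYinv + XinvAddYinv * XaddY = (2 : ℤ) • 1 + (-2 : ℤ) • XYX := by
  decide

noncomputable def twinPair : L := C XaddY * T 1 + C XinvAddYinv * T 2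

theorem twinPair_mul_T (n : ℤ) :
    twinPair * T n = C XaddY * T (n + 1) + C XinvAddYinv * T (n + 2) := by
  simp only [twinPair, add_mul, mul_T_assoc, add_comm]

theorem coeff_twinPair_mul_T (n k : ℤ) :
    (twinPair * T n).coeff k =
      if n + 1 = k then XaddY else if n + 2 = k then XinvAddYinv else 0 := by
  rw [twinPair_mul_T, AddMonoidAlgebra.coeff_add, Finsupp.add_apply, coeff_C_mul_T, coeff_C_mul_T]
  split_ifs <;> first | omega | simp

theorem twinPair_mul_twinPair : twinPair * twinPair = C ((2 : ℤ) • 1 + (-2 : ℤ) • XYX) * T 3 := by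
  simp only [twinPair, add_mul, mul_add, C_mul_T_mul_C_mul_T, XaddY_mul_XaddY,
    XinvAddYinv_mul_XinvAddYinv, map_zero, zero_mul, zero_add, add_zero]
  rw [← XaddY_mul_XinvAddYinv_add, map_add, add_mul, show (1 : ℤ) + 2 = 3 by norm_num,
    show (2 : ℤ) + 1 = 3 by norm_num, add_comm]

def twinBasis : Set L := {1, C XYX, twinPair}

def twinGenerators : Set L := {f | ∃ b ∈ twinBasis, ∃ n : ℤ, f = b * T (3 * n)}

theorem mul_T_mem_span_twinGenerators {f : L} (hf : f ∈ Submodule.span ℤ twinGenerators)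
    (n : ℤ) : f * T (3 * n) ∈ Submodule.span ℤ twinGenerators := by
  induction hf using Submodule.span_induction with
  | mem g hg =>
    obtain ⟨b, hb, m, rfl⟩ := hg
    rw [mul_T_assoc, ← mul_add]
    exact Submodule.subset_span ⟨b, hb, m + n, rfl⟩
  | zero => simp
  | add g h _ _ hg hh => simpa only [add_mul] using add_mem hg hh
  | smul z g _ hg => simpa only [smul_mul_assoc] using Submodule.smul_mem _ z hg

theorem twinBasis_subset_span : twinBasis ⊆ Submodule.span ℤ twinGenerators := fun b hb =>
  Submodule.subset_span ⟨b, hb, 0, by simp [T_zero]⟩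

theorem one_mem_span_twinGenerators : (1 : L) ∈ Submodule.span ℤ twinGenerators :=
  twinBasis_subset_span (by simp [twinBasis])

theorem C_XYX_mem_span_twinGenerators : C XYX ∈ Submodule.span ℤ twinGenerators :=
  twinBasis_subset_span (by simp [twinBasis])

theorem twinPair_mem_span_twinGenerators : twinPair ∈ Submodule.span ℤ twinGenerators :=
  twinBasis_subset_span (by simp [twinBasis])

theorem C_mul_T_mem_span_twinGenerators (c c' n : ℤ) :
    C (c • 1 + c' • XYX) * T (3 * n) ∈ Submodule.span ℤ twinGenerators := by
  refine mul_T_mem_span_twinGenerators ?_ n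
  rw [map_add, map_zsmul, map_zsmul, map_one]
  exact add_mem (Submodule.smul_mem _ c one_mem_span_twinGenerators)
    (Submodule.smul_mem _ c' C_XYX_mem_span_twinGenerators)

theorem C_XYX_mul_twinPair : C XYX * twinPair = -twinPair := by
  rw [← mul_one (C XYX), ← T_zero]
  simp only [twinPair, mul_add, C_mul_T_mul_C_mul_T, XYX_mul_XaddY, XYX_mul_XinvAddYinv,
    C_neg_mul_T, zero_add, neg_add]

theorem twinPair_mul_C_XYX : twinPair * C XYX = -twinPair := by
  rw [← mul_one (C XYX), ← T_zero]
  simp only [twinPair, add_mul, C_mul_T_mul_C_mul_T, XaddY_mul_XYX, XinvAddYinv_mul_XYX,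
    C_neg_mul_T, add_zero, neg_add]

theorem twinBasis_mul_mem_span {b b' : L} (hb : b ∈ twinBasis) (hb' : b' ∈ twinBasis) :
    b * b' ∈ Submodule.span ℤ twinGenerators := by
  rcases hb with rfl | rfl | rfl
  · rw [one_mul]
    exact twinBasis_subset_span hb'
  · rcases hb' with rfl | rfl | rfl
    · simpa only [mul_one] using C_XYX_mem_span_twinGenerators
    · rw [← map_mul, XYX_mul_XYX, map_one]
      exact one_mem_span_twinGenerators
    · rw [C_XYX_mul_twinPair]
      exact neg_mem twinPair_mem_span_twinGenerators
  · rcases hb' with rfl | rfl | rfl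
    · simpa only [mul_one] using twinPair_mem_span_twinGenerators
    · rw [twinPair_mul_C_XYX]
      exact neg_mem twinPair_mem_span_twinGenerators
    · rw [twinPair_mul_twinPair, show (3 : ℤ) = 3 * 1 by norm_num]
      exact C_mul_T_mem_span_twinGenerators 2 (-2) 1

open scoped Pointwise in
theorem twinGenerators_mul_subset :
    twinGenerators * twinGenerators ⊆ Submodule.span ℤ twinGenerators := by
  rintro _ ⟨_, ⟨b, hb, m, rfl⟩, _, ⟨b', hb', n, rfl⟩, rfl⟩
  change b * T (3 * m) * (b' * T (3 * n)) ∈ _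
  rw [← mul_assoc, mul_assoc b, T_mul, ← mul_assoc, mul_T_assoc, ← mul_add]
  exact mul_T_mem_span_twinGenerators (twinBasis_mul_mem_span hb hb') _

theorem mul_mem_span_twinGenerators {f g : L} (hf : f ∈ Submodule.span ℤ twinGenerators)
    (hg : g ∈ Submodule.span ℤ twinGenerators) : f * g ∈ Submodule.span ℤ twinGenerators :=
  Submodule.mul_mem_span_of_mul_subset twinGenerators_mul_subset hf hg

def twinSubmodule : Submodule ℤ L where
  carrier := {f | IsTwin f}
  zero_mem' := ⟨0, 0, 0, 0, by simp, by simp, by simp, fun _ => rfl⟩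
  add_mem' := by
    rintro f g ⟨c₁, c₁', a₁, b₁, hf₀, hf₁, hf₂, hf⟩ ⟨c₂, c₂', a₂, b₂, hg₀, hg₁, hg₂, hg⟩
    refine ⟨c₁ + c₂, c₁' + c₂', a₁ + a₂, b₁ + b₂, fun j hj => ?_, fun j hj => ?_,
      fun j hj => ?_, fun j => by simp only [Pi.add_apply, hf, hg]⟩ <;>
    simp only [AddMonoidAlgebra.coeff_add, Finsupp.add_apply, Pi.add_apply, hf₀ j, hg₀ j,
      hf₁ j, hg₁ j, hf₂ j, hg₂ j, hj] <;> module
  smul_mem' := by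
    rintro z f ⟨c, c', a, b, h₀, h₁, h₂, h⟩
    refine ⟨z • c, z • c', z • a, z • b, fun j hj => ?_, fun j hj => ?_,
      fun j hj => ?_, fun j => by simp only [Pi.smul_apply, h]⟩ <;>
    simp only [AddMonoidAlgebra.coeff_smul_apply, Pi.smul_apply, h₀ j, h₁ j, h₂ j, hj] <;> module

@[simp]
theorem mem_twinSubmodule {f : L} : f ∈ twinSubmodule ↔ IsTwin f := Iff.rfl

theorem isTwin_C_mul_T (c c' n : ℤ) : IsTwin (C (c • 1 + c' • XYX) * T (3 * n)) := by
  refine ⟨fun j => if j = 3 * n then c else 0, fun j => if j = 3 * n then c' else 0, 0, 0,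
    fun j hj => ?_, fun j hj => ?_, fun j hj => ?_, fun _ => rfl⟩
  · rw [coeff_C_mul_T]
    dsimp only
    split_ifs <;> first | omega | simp [XYX]
  · rw [coeff_C_mul_T, if_neg (by omega)]
    simp
  · rw [coeff_C_mul_T, if_neg (by omega)]
    simp

theorem isTwin_twinPair_mul_T (n : ℤ) : IsTwin (twinPair * T (3 * n)) := by
  refine ⟨0, 0, fun j => if j / 3 = n then 1 else 0, fun j => if j / 3 = n then 1 else 0,
    fun j hj => ?_, fun j hj => ?_, fun j hj => ?_, fun j => ?_⟩ <;>
  simp only [coeff_twinPair_mul_T] <;> split_ifs <;> first | omega | simp_all [XaddY, XinvAddYinv]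

theorem twinGenerators_subset_twinSubmodule : twinGenerators ⊆ twinSubmodule := by
  rintro _ ⟨b, hb, n, rfl⟩
  rcases hb with rfl | rfl | rfl
  · simpa using isTwin_C_mul_T 1 0 n
  · simpa using isTwin_C_mul_T 0 1 n
  · exact isTwin_twinPair_mul_T n

theorem mem_span_twinGenerators_of_isTwin {f : L} (hf : IsTwin f) :
    f ∈ Submodule.span ℤ twinGenerators := by
  obtain ⟨c, c', a, b, h₀, h₁, h₂, hab⟩ := hf
  set block : ℤ → L := fun n =>
    C (f.coeff (3 * n)) * T (3 * n) + a (3 * n + 1) • (twinPair * T (3 * n)) with hblock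
  have block_mem (n : ℤ) : block n ∈ Submodule.span ℤ twinGenerators := by
    refine add_mem ?_ (Submodule.smul_mem _ _
      (mul_T_mem_span_twinGenerators twinPair_mem_span_twinGenerators n))
    rw [h₀ _ (by omega)]
    exact C_mul_T_mem_span_twinGenerators _ _ n
  have coeff_block (n k : ℤ) : (block n).coeff k = if k / 3 = n then f.coeff k else 0 := by
    simp only [hblock, AddMonoidAlgebra.coeff_add, Finsupp.add_apply,
      AddMonoidAlgebra.coeff_smul_apply, coeff_C_mul_T, coeff_twinPair_mul_T]
    rcases eq_or_ne (k / 3) n with rfl | hn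
    · obtain h | h | h : k % 3 = 0 ∨ k % 3 = 1 ∨ k % 3 = 2 := by omega
      · simp [show 3 * (k / 3) = k by omega]
      · simp [show 3 * (k / 3) ≠ k by omega, show 3 * (k / 3) + 1 = k by omega, h₁ k h, XaddY]
      · simp [show 3 * (k / 3) ≠ k by omega, show 3 * (k / 3) + 1 ≠ k by omega,
          show 3 * (k / 3) + 2 = k by omega, hab, h₂ k h, XinvAddYinv]
    · simp [hn, show 3 * n ≠ k by omega, show 3 * n + 1 ≠ k by omega, show 3 * n + 2 ≠ k by omega]
  have hsum : f = ∑ n ∈ f.coeff.support.image (· / 3), block n := by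
    refine LaurentPolynomial.ext fun k => ?_
    rw [AddMonoidAlgebra.coeff_sum, Finsupp.finsetSum_apply]
    simp only [coeff_block, Finset.sum_ite_eq]
    split_ifs with hk
    · rfl
    · by_contra hfk
      exact hk (Finset.mem_image_of_mem _ (Finsupp.mem_support_iff.2 hfk))
  rw [hsum]
  exact Submodule.sum_mem _ fun n _ => block_mem n

theorem span_twinGenerators_eq_twinSubmodule : Submodule.span ℤ twinGenerators = twinSubmodule :=
  le_antisymm (Submodule.span_le.2 twinGenerators_subset_twinSubmodule)
    fun _ hf => mem_span_twinGenerators_of_isTwin hf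

/-- The set of twin Laurent polynomials is a subring of `L`: it contains `0` and `1`,
and is closed under addition, negation, and multiplication. -/
theorem stmt_6 :
    IsTwin 0 ∧ IsTwin 1 ∧
    (∀ f g : L, IsTwin f → IsTwin g → IsTwin (f + g)) ∧
    (∀ f : L, IsTwin f → IsTwin (-f)) ∧
    (∀ f g : L, IsTwin f → IsTwin g → IsTwin (f * g)) := by
  have isTwin_iff {f : L} : IsTwin f ↔ f ∈ Submodule.span ℤ twinGenerators := by
    rw [span_twinGenerators_eq_twinSubmodule, mem_twinSubmodule]
  refine ⟨twinSubmodule.zero_mem, ?_, fun _ _ => twinSubmodule.add_mem,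
    fun _ => twinSubmodule.neg_mem, fun f g hf hg => ?_⟩
  · exact isTwin_iff.2 one_mem_span_twinGenerators
  · exact isTwin_iff.2 (mul_mem_span_twinGenerators (isTwin_iff.1 hf) (isTwin_iff.1 hg))
end

section
/- If f(t) is a twin Laurent polynomial, then for every integer m both f(t)·t^{3m} and f(t)·(XYX)·t^{3m} are twin Laurent polynomials. -/
open LaurentPolynomial Finset

/-! Multiplying by `t^{3m}` shifts coefficient indices by a multiple of 3, so it preserves each
residue class and the pairing `3j+1 ↔ 3j+2`. The matrix `Z = XYX`, the image of a double
transposition, is an involution with `(X+Y) Z = -(X+Y)` and `(X⁻¹+Y⁻¹) Z = -(X⁻¹+Y⁻¹)`, so right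
multiplication by `Z` swaps `c_j` with `c_j'` and negates both `a_j` and `b_j`. -/

namespace LaurentPolynomial

variable {R : Type*} [Semiring R]

lemma coeff_mul_T (f : R[T;T⁻¹]) (n j : ℤ) : (f * T n).coeff j = f.coeff (j - n) := by
  rw [show (T n : R[T;T⁻¹]) = AddMonoidAlgebra.single n 1 from rfl,
    AddMonoidAlgebra.coeff_mul_single_apply, mul_one, sub_eq_add_neg]

lemma coeff_mul_C (f : R[T;T⁻¹]) (r : R) (j : ℤ) : (f * C r).coeff j = f.coeff j * r := by
  rw [← single_eq_C, AddMonoidAlgebra.coeff_mul_single_apply, neg_zero, add_zero]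

end LaurentPolynomial

lemma XYX_mul_XYX_s7 : Xm * Ym * Xm * (Xm * Ym * Xm) = 1 := by decide

lemma X_add_Y_mul_XYX : (Xm + Ym) * (Xm * Ym * Xm) = -(Xm + Ym) := by decide

lemma Xinv_add_Yinv_mul_XYX : (Xinv + Yinv) * (Xm * Ym * Xm) = -(Xinv + Yinv) := by decide

namespace IsTwin

variable {f : L}

lemma mul_T_three_mul (hf : IsTwin f) (m : ℤ) : IsTwin (f * T (3 * m)) := by
  obtain ⟨c, c', a, b, h0, h1, h2, hab⟩ := hf
  refine ⟨fun j => c (j - 3 * m), fun j => c' (j - 3 * m), fun j => a (j - 3 * m),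
    fun j => b (j - 3 * m), fun j hj => ?_, fun j hj => ?_, fun j hj => ?_, fun j => ?_⟩
  · rw [coeff_mul_T]; exact h0 _ (by omega)
  · rw [coeff_mul_T]; exact h1 _ (by omega)
  · rw [coeff_mul_T]; exact h2 _ (by omega)
  · simpa only [show 3 * j + 1 - 3 * m = 3 * (j - m) + 1 by ring,
      show 3 * j + 2 - 3 * m = 3 * (j - m) + 2 by ring] using hab (j - m)

lemma mul_C_XYX (hf : IsTwin f) : IsTwin (f * C (Xm * Ym * Xm)) := by
  obtain ⟨c, c', a, b, h0, h1, h2, hab⟩ := hf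
  refine ⟨c', c, -a, -b, fun j hj => ?_, fun j hj => ?_, fun j hj => ?_, fun j => ?_⟩
  · rw [coeff_mul_C, h0 j hj, add_mul, smul_mul_assoc, smul_mul_assoc, one_mul, XYX_mul_XYX_s7,
      add_comm]
  · rw [coeff_mul_C, h1 j hj, smul_mul_assoc, X_add_Y_mul_XYX, smul_neg, Pi.neg_apply, neg_smul]
  · rw [coeff_mul_C, h2 j hj, smul_mul_assoc, Xinv_add_Yinv_mul_XYX, smul_neg, Pi.neg_apply,
      neg_smul]
  · simp only [Pi.neg_apply, hab]

end IsTwin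

/-- If `f` is twin, then for every integer `m` both `f·t^{3m}` and `f·(XYX)·t^{3m}` are twin. -/
theorem stmt_7 (f : L) (hf : IsTwin f) (m : ℤ) :
    IsTwin (f * T (3 * m)) ∧ IsTwin (f * C (Xm * Ym * Xm) * T (3 * m)) :=
  ⟨hf.mul_T_three_mul m, hf.mul_C_XYX.mul_T_three_mul m⟩
end

section
/- For every integer k ≥ 0, the Laurent polynomial Y⁻¹t⁻¹·[(I − Yt)·Q_{3k+1}(t)·Yt + (YX)^{3k+2}·t^{6k+4}]·(I − Xt) is twin. -/
open LaurentPolynomial Finset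

/-- `Q m = ∑_{i=0}^m (YX)^i t^{2i}` for `m ≥ 0` and
`Q (-m) = ∑_{i=1}^m (X⁻¹Y⁻¹)^i t^{-2i}` for `m ≥ 1`. -/
noncomputable def Q (m : ℤ) : L :=
  if 0 ≤ m then ∑ i ∈ Finset.range (m.toNat + 1), C ((Ym * Xm) ^ i) * T (2 * (i : ℤ))
  else ∑ i ∈ Finset.range (-m).toNat, C ((Xinv * Yinv) ^ (i + 1)) * T (-(2 * ((i : ℤ) + 1)))

/-! Since `(YX)³ = I` and `t` is central, `Q_{3k+4} - Q_{3k+1} = t^{6k} (Q_4 - Q_1)`, so the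
Laurent polynomial `P_k` of the statement (`sandwich k`) satisfies
`P_{k+1} = P_k + t^{6k} (P_1 - P_0)`.
Twin Laurent polynomials form an additive group that is stable under multiplication by `t^{3n}`,
so everything reduces to `P_0` and `P_1` being twin, a finite computation with the matrices. -/

noncomputable def qTerm (i : ℕ) : L := C ((Ym * Xm) ^ i) * T (2 * (i : ℤ))

noncomputable def bracket (k : ℕ) : L :=
  (1 - C Ym * T 1) * Q (3 * k + 1) * (C Ym * T 1) + C ((Ym * Xm) ^ (3 * k + 2)) * T (6 * k + 4)

noncomputable def sandwich (k : ℕ) : L := C Yinv * T (-1) * bracket k * (1 - C Xm * T 1)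

noncomputable def twinBlock (c c' a : ℤ) : L :=
  C (c • 1 + c' • (Xm * Ym * Xm)) + C (a • (Xm + Ym)) * T 1 + C (a • (Xinv + Yinv)) * T 2

section LaurentT

variable {R : Type*} [Semiring R]

lemma coeff_T_mul (n j : ℤ) (f : R[T;T⁻¹]) : (T n * f).coeff j = f.coeff (j - n) := by
  rw [T, AddMonoidAlgebra.coeff_single_mul_apply, one_mul, neg_add_eq_sub]

lemma mul_T_mul_mul (f g h : R[T;T⁻¹]) (n : ℤ) : f * (T n * g) * h = T n * (f * g * h) := by
  rw [← mul_assoc, ← (commute_T n f).eq, mul_assoc, mul_assoc, mul_assoc]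

end LaurentT

lemma YX_pow_three : (Ym * Xm) ^ 3 = 1 := by decide

lemma qTerm_three_mul_add (k i : ℕ) : qTerm (3 * k + i) = T (6 * k) * qTerm i := by
  rw [qTerm, qTerm, pow_add, pow_mul, YX_pow_three, one_pow, one_mul, ← mul_assoc,
    (commute_T _ _).eq, mul_assoc, ← T_add]
  push_cast
  ring_nf

lemma Q_natCast (n : ℕ) : Q n = ∑ i ∈ range (n + 1), qTerm i := by
  rw [Q, if_pos (Int.natCast_nonneg n), Int.toNat_natCast]
  rfl

lemma Q_natCast_add_three (n : ℕ) :
    Q (n + 3 : ℕ) = Q n + ∑ i ∈ range 3, qTerm (n + 1 + i) := by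
  rw [Q_natCast, Q_natCast, show n + 3 + 1 = n + 1 + 3 by ring, sum_range_add]

lemma Q_three_mul_add_four (k : ℕ) :
    Q (3 * k + 4 : ℕ) = Q (3 * k + 1 : ℕ) + T (6 * k) * (Q 4 - Q 1) := by
  have h₄ : Q 4 = Q 1 + ∑ i ∈ range 3, qTerm (1 + 1 + i) := by
    exact_mod_cast Q_natCast_add_three 1
  rw [Q_natCast_add_three (3 * k + 1), h₄, add_sub_cancel_left, mul_sum]
  simp only [add_assoc, qTerm_three_mul_add]

lemma bracket_eq (k : ℕ) : bracket k =
    (1 - C Ym * T 1) * Q (3 * k + 1 : ℕ) * (C Ym * T 1) + T (6 * k) * qTerm 2 := by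
  rw [← qTerm_three_mul_add, qTerm, bracket]
  push_cast
  ring_nf

lemma bracket_succ (k : ℕ) :
    bracket (k + 1) = bracket k + T (6 * k) * (bracket 1 - bracket 0) := by
  have h₀ : bracket 0 = (1 - C Ym * T 1) * Q 1 * (C Ym * T 1) + qTerm 2 := by
    simpa using bracket_eq 0
  have h₁ : bracket 1 = (1 - C Ym * T 1) * Q 4 * (C Ym * T 1) + T 6 * qTerm 2 := by
    simpa using bracket_eq 1
  have hT : (T (6 * ((k + 1 : ℕ) : ℤ)) : L) = T (6 * k) * T 6 := by
    rw [← T_add]; push_cast; ring_nf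
  rw [bracket_eq, bracket_eq, h₀, h₁, hT, show 3 * (k + 1) + 1 = 3 * k + 4 by ring,
    Q_three_mul_add_four, mul_add, add_mul, mul_T_mul_mul]
  simp only [mul_sub, sub_mul, mul_add, mul_assoc]
  abel

lemma sandwich_succ (k : ℕ) :
    sandwich (k + 1) = sandwich k + T (6 * k) * (sandwich 1 - sandwich 0) := by
  simp only [sandwich, bracket_succ k, mul_add, add_mul, mul_T_mul_mul, mul_sub, sub_mul]
  abel

namespace IsTwin

lemma add {f g : L} (hf : IsTwin f) (hg : IsTwin g) : IsTwin (f + g) := by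
  obtain ⟨c, c', a, b, h₀, h₁, h₂, hab⟩ := hf
  obtain ⟨d, d', e, e', g₀, g₁, g₂, hee'⟩ := hg
  refine ⟨c + d, c' + d', a + e, b + e', fun j hj => ?_, fun j hj => ?_, fun j hj => ?_,
    fun j => by simp [hab j, hee' j]⟩
  · rw [AddMonoidAlgebra.coeff_add, Finsupp.add_apply, h₀ j hj, g₀ j hj, Pi.add_apply,
      Pi.add_apply, add_smul, add_smul]
    abel
  · rw [AddMonoidAlgebra.coeff_add, Finsupp.add_apply, h₁ j hj, g₁ j hj, Pi.add_apply,
      add_smul]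
  · rw [AddMonoidAlgebra.coeff_add, Finsupp.add_apply, h₂ j hj, g₂ j hj, Pi.add_apply,
      add_smul]

lemma neg {f : L} (hf : IsTwin f) : IsTwin (-f) := by
  obtain ⟨c, c', a, b, h₀, h₁, h₂, hab⟩ := hf
  refine ⟨-c, -c', -a, -b, fun j hj => ?_, fun j hj => ?_, fun j hj => ?_,
    fun j => by simp [hab j]⟩
  · rw [AddMonoidAlgebra.coeff_neg, Finsupp.neg_apply, h₀ j hj, Pi.neg_apply, Pi.neg_apply,
      neg_smul, neg_smul, neg_add]
  · rw [AddMonoidAlgebra.coeff_neg, Finsupp.neg_apply, h₁ j hj, Pi.neg_apply, neg_smul]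
  · rw [AddMonoidAlgebra.coeff_neg, Finsupp.neg_apply, h₂ j hj, Pi.neg_apply, neg_smul]

lemma sub {f g : L} (hf : IsTwin f) (hg : IsTwin g) : IsTwin (f - g) :=
  sub_eq_add_neg f g ▸ hf.add hg.neg

lemma T_mul {f : L} (hf : IsTwin f) {n : ℤ} (hn : 3 ∣ n) : IsTwin (T n * f) := by
  obtain ⟨c, c', a, b, h₀, h₁, h₂, hab⟩ := hf
  obtain ⟨m, rfl⟩ := hn
  refine ⟨fun j => c (j - 3 * m), fun j => c' (j - 3 * m), fun j => a (j - 3 * m),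
    fun j => b (j - 3 * m), fun j hj => ?_, fun j hj => ?_, fun j hj => ?_, fun j => ?_⟩
  · rw [coeff_T_mul, h₀ _ (by omega)]
  · rw [coeff_T_mul, h₁ _ (by omega)]
  · rw [coeff_T_mul, h₂ _ (by omega)]
  · simpa only [show 3 * j + 1 - 3 * m = 3 * (j - m) + 1 by ring,
      show 3 * j + 2 - 3 * m = 3 * (j - m) + 2 by ring] using hab (j - m)

end IsTwin

lemma coeff_twinBlock (c c' a j : ℤ) : (twinBlock c c' a).coeff j =
    (if j = 0 then c • 1 + c' • (Xm * Ym * Xm) else 0) + (if j = 1 then a • (Xm + Ym) else 0)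
      + (if j = 2 then a • (Xinv + Yinv) else 0) := by
  rw [twinBlock, ← single_eq_C_mul_T, ← single_eq_C_mul_T, ← single_eq_C]
  simp only [AddMonoidAlgebra.coeff_add, AddMonoidAlgebra.coeff_single, Finsupp.add_apply,
    Finsupp.single_apply, eq_comm]

lemma isTwin_twinBlock (c c' a : ℤ) : IsTwin (twinBlock c c' a) := by
  refine ⟨fun j => if j = 0 then c else 0, fun j => if j = 0 then c' else 0,
    fun j => if j = 1 then a else 0, fun j => if j = 2 then a else 0,
    fun j hj => ?_, fun j hj => ?_, fun j hj => ?_, fun j => by simp⟩ <;>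
  rw [coeff_twinBlock] <;> dsimp only <;> split_ifs <;> first | omega | simp

lemma sandwich_zero : sandwich 0 = twinBlock 1 0 (-1) + T 3 * twinBlock 0 (-1) 0 := by
  rw [sandwich, bracket_eq, Q_natCast]
  simp only [sum_range_succ, sum_range_zero, zero_add, qTerm, twinBlock, ← single_zero_one_eq_one,
    T, ← single_eq_C, mul_add, add_mul, mul_sub, sub_mul, AddMonoidAlgebra.single_mul_single]
  refine LaurentPolynomial.ext fun j => ?_
  simp only [AddMonoidAlgebra.coeff_add, AddMonoidAlgebra.coeff_sub, AddMonoidAlgebra.coeff_single,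
    Finsupp.add_apply, Finsupp.sub_apply, Finsupp.single_apply]
  by_cases hj : 0 ≤ j ∧ j ≤ 4
  · obtain ⟨h₀, h₁⟩ := hj
    interval_cases j <;> decide
  · simp (disch := omega) only [if_neg]
    simp

lemma sandwich_one : sandwich 1 = twinBlock 1 0 (-1) + T 3 * twinBlock 0 (-2) (-1)
    + T 6 * twinBlock 2 0 (-1) + T 9 * twinBlock 0 (-1) 0 := by
  rw [sandwich, bracket_eq, Q_natCast]
  simp only [sum_range_succ, sum_range_zero, zero_add, qTerm, twinBlock, ← single_zero_one_eq_one,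
    T, ← single_eq_C, mul_add, add_mul, mul_sub, sub_mul, AddMonoidAlgebra.single_mul_single]
  refine LaurentPolynomial.ext fun j => ?_
  simp only [AddMonoidAlgebra.coeff_add, AddMonoidAlgebra.coeff_sub, AddMonoidAlgebra.coeff_single,
    Finsupp.add_apply, Finsupp.sub_apply, Finsupp.single_apply]
  by_cases hj : 0 ≤ j ∧ j ≤ 10
  · obtain ⟨h₀, h₁⟩ := hj
    interval_cases j <;> decide
  · simp (disch := omega) only [if_neg]
    simp

lemma isTwin_sandwich_zero : IsTwin (sandwich 0) := by
  rw [sandwich_zero]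
  exact (isTwin_twinBlock ..).add ((isTwin_twinBlock ..).T_mul (by norm_num))

lemma isTwin_sandwich_one : IsTwin (sandwich 1) := by
  rw [sandwich_one]
  exact (((isTwin_twinBlock ..).add ((isTwin_twinBlock ..).T_mul (by norm_num))).add
    ((isTwin_twinBlock ..).T_mul (by norm_num))).add ((isTwin_twinBlock ..).T_mul (by norm_num))

/-- For every `k ≥ 0`, `Y⁻¹t⁻¹·[(I − Yt)·Q_{3k+1}(t)·Yt + (YX)^{3k+2}·t^{6k+4}]·(I − Xt)` is twin. -/
theorem stmt_9 (k : ℕ) :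
    IsTwin (C Yinv * T (-1) *
      ((1 - C Ym * T 1) * Q (3 * k + 1) * (C Ym * T 1)
        + C ((Ym * Xm) ^ (3 * k + 2)) * T (6 * k + 4)) *
      (1 - C Xm * T 1)) := by
  show IsTwin (sandwich k)
  induction k with
  | zero => exact isTwin_sandwich_zero
  | succ k ih =>
    rw [sandwich_succ]
    exact ih.add ((isTwin_sandwich_one.sub isTwin_sandwich_zero).T_mul ⟨2 * k, by ring⟩)
end

section
/- Let f be a twin Laurent polynomial, regarded (via the canonical identification of Laurent polynomials with 3×3 matrix coefficients with 3×3 matrices of Laurent polynomials) as a 3×3 matrix over ℤ[t, t⁻¹]. Then the determinant of f is a Laurent polynomial in t³; that is, every exponent occurring in det f with nonzero coefficient is divisible by 3. -/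
open LaurentPolynomial Finset

/-- The canonical identification of a Laurent polynomial with 3×3 integer matrix
coefficients with a 3×3 matrix of integer Laurent polynomials. -/
noncomputable def toMat (f : L) : Matrix (Fin 3) (Fin 3) (LaurentPolynomial ℤ) :=
  Matrix.of fun i j => AddMonoidAlgebra.ofCoeff (Finsupp.mapRange (fun M : M3 => M i j) rfl f.coeff)

/-!
Let `ω` be a primitive cube root of unity. The complex matrix `V = intertwiner ω` has determinant
`8`, commutes with `XYX` and satisfies `V (X + Y) = ω (X + Y) V` and
`V (X⁻¹ + Y⁻¹) = ω² (X⁻¹ + Y⁻¹) V`. Hence `V d_j = ω ^ j d_j V` for every coefficient `d_j` of a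
twin `f`, that is `V f(t) V⁻¹ = f(ω t)` over `ℂ[t, t⁻¹]`. Taking determinants, `det f(t) = det f(ω t)`,
so every coefficient `p_n` of `det f` satisfies `p_n = ω ^ n p_n`, and `p_n ≠ 0` forces `3 ∣ n`.
-/

namespace LaurentPolynomial

variable {R S : Type*} [CommRing R] [CommRing S]

theorem val_isUnit_T_one_zpow (m : ℤ) :
    (((isUnit_T 1).unit ^ m : (S[T;T⁻¹])ˣ) : S[T;T⁻¹]) = T m := by
  induction m using Int.induction_on with
  | zero => rw [zpow_zero, Units.val_one, T_zero]
  | succ k ih => rw [zpow_add_one, Units.val_mul, ih, IsUnit.unit_spec, T_add]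
  | pred k ih =>
    rw [zpow_sub_one, Units.val_mul, ih, T_sub, Units.inv_eq_of_mul_eq_one_right]
    rw [IsUnit.unit_spec, ← T_add, add_neg_cancel, T_zero]

noncomputable def scale (φ : R →+* S) (z : Sˣ) : R[T;T⁻¹] →+* S[T;T⁻¹] :=
  eval₂ (C.comp φ) (Units.map ((C : S →+* S[T;T⁻¹]) : S →* S[T;T⁻¹]) z * (isUnit_T 1).unit)

theorem coeff_scale (φ : R →+* S) (z : Sˣ) (p : R[T;T⁻¹]) (n : ℤ) :
    (scale φ z p).coeff n = φ (p.coeff n) * ↑(z ^ n) := by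
  induction p using LaurentPolynomial.induction_on' with
  | add p q hp hq =>
    simp only [map_add, AddMonoidAlgebra.coeff_add, Finsupp.add_apply, hp, hq, add_mul]
  | C_mul_T m a =>
    rw [scale, eval₂_C_mul_T, mul_zpow, Units.val_mul, val_isUnit_T_one_zpow, ← map_zpow,
      Units.coe_map, RingHom.comp_apply, MonoidHom.coe_coe, ← mul_assoc, ← map_mul,
      ← single_eq_C_mul_T, ← single_eq_C_mul_T, AddMonoidAlgebra.coeff_single,
      AddMonoidAlgebra.coeff_single, Finsupp.single_apply, Finsupp.single_apply]
    split_ifs with h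
    · rw [h]
    · rw [map_zero, zero_mul]

theorem zpow_eq_one_of_scale_eq [IsDomain S] {φ : R →+* S} {z : Sˣ} {p : R[T;T⁻¹]}
    (h : scale φ 1 p = scale φ z p) {n : ℤ} (hn : φ (p.coeff n) ≠ 0) : ((z ^ n : Sˣ) : S) = 1 := by
  have hcoeff := congrArg (fun q => q.coeff n) h
  simp only [coeff_scale, one_zpow, Units.val_one, mul_one] at hcoeff
  exact mul_left_cancel₀ hn (hcoeff.symm.trans (mul_one _).symm)

end LaurentPolynomial

theorem Matrix.det_eq_of_semiconjBy {n R : Type*} [Fintype n] [DecidableEq n] [CommRing R]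
    {V A B : Matrix n n R} (h : SemiconjBy V A B) (hV : IsUnit V.det) : A.det = B.det := by
  have hdet := congrArg Matrix.det h.eq
  rw [Matrix.det_mul, Matrix.det_mul, mul_comm B.det] at hdet
  exact hV.mul_left_cancel hdet

section Intertwiner

variable {K : Type*} [CommRing K]

def intertwiner (ω : K) : Matrix (Fin 3) (Fin 3) K :=
  !![-1, -1 - 2 * ω, 1 + 2 * ω; -2 - ω, -ω, 2 + ω; -1 + ω, 1 - ω, 1 + ω]

theorem Xm_mul_Ym_mul_Xm : Xm * Ym * Xm = !![-1, 0, 0; -1, 0, 1; -1, 1, 0] := by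
  decide

theorem Xm_add_Ym : Xm + Ym = !![-1, 1, -1; -1, 1, -1; 0, 0, 0] := by
  decide

theorem Xinv_add_Yinv : Xinv + Yinv = !![-1, -1, 1; 0, 0, 0; -1, -1, 1] := by
  decide

theorem commute_intertwiner_XYX (ω : K) :
    Commute (intertwiner ω) ((Int.castRingHom K).mapMatrix (Xm * Ym * Xm)) := by
  rw [Commute, SemiconjBy, Xm_mul_Ym_mul_Xm]
  ext i j
  fin_cases i <;> fin_cases j <;>
    simp only [intertwiner, RingHom.mapMatrix_apply, Matrix.map_apply, Matrix.mul_apply,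
      Fin.sum_univ_three, Matrix.of_apply, Matrix.cons_val',
      Matrix.cons_val, Matrix.cons_val_zero, Matrix.cons_val_one, Matrix.cons_val_fin_one,
      Fin.zero_eta, Fin.mk_one, Fin.reduceFinMk, Fin.isValue, Int.coe_castRingHom, Int.cast_neg,
      Int.cast_one, Int.cast_zero] <;> ring

theorem semiconjBy_intertwiner_X_add_Y {ω : K} (hω : ω ^ 2 + ω + 1 = 0) :
    SemiconjBy (intertwiner ω) ((Int.castRingHom K).mapMatrix (Xm + Ym))
      (ω • (Int.castRingHom K).mapMatrix (Xm + Ym)) := by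
  rw [SemiconjBy, Xm_add_Ym]
  ext i j
  fin_cases i <;> fin_cases j <;>
    simp only [intertwiner, RingHom.mapMatrix_apply, Matrix.map_apply, Matrix.mul_apply,
      Matrix.smul_apply, smul_eq_mul, Fin.sum_univ_three, Matrix.of_apply, Matrix.cons_val',
      Matrix.cons_val, Matrix.cons_val_zero, Matrix.cons_val_one, Matrix.cons_val_fin_one,
      Fin.zero_eta, Fin.mk_one, Fin.reduceFinMk, Fin.isValue, Int.coe_castRingHom, Int.cast_neg,
      Int.cast_one, Int.cast_zero] <;> grind

theorem semiconjBy_intertwiner_Xinv_add_Yinv {ω : K} (hω : ω ^ 2 + ω + 1 = 0) :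
    SemiconjBy (intertwiner ω) ((Int.castRingHom K).mapMatrix (Xinv + Yinv))
      (ω ^ 2 • (Int.castRingHom K).mapMatrix (Xinv + Yinv)) := by
  rw [SemiconjBy, Xinv_add_Yinv]
  ext i j
  fin_cases i <;> fin_cases j <;>
    simp only [intertwiner, RingHom.mapMatrix_apply, Matrix.map_apply, Matrix.mul_apply,
      Matrix.smul_apply, smul_eq_mul, Fin.sum_univ_three, Matrix.of_apply, Matrix.cons_val',
      Matrix.cons_val, Matrix.cons_val_zero, Matrix.cons_val_one, Matrix.cons_val_fin_one,
      Fin.zero_eta, Fin.mk_one, Fin.reduceFinMk, Fin.isValue, Int.coe_castRingHom, Int.cast_neg,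
      Int.cast_one, Int.cast_zero] <;> grind

theorem det_intertwiner {ω : K} (hω : ω ^ 2 + ω + 1 = 0) : (intertwiner ω).det = 8 := by
  rw [intertwiner, Matrix.det_fin_three]
  simp only [Matrix.of_apply, Matrix.cons_val', Matrix.cons_val_zero, Matrix.cons_val_one,
    Matrix.cons_val_fin_one, Matrix.cons_val, Fin.isValue]
  linear_combination (-8 : K) * hω

end Intertwiner

section Twin

variable {S : Type*} [CommRing S]

theorem IsTwin.semiconjBy_intertwiner_coeff {f : L} (hf : IsTwin f) {ω : Sˣ}
    (hω : (ω : S) ^ 2 + ω + 1 = 0) (n : ℤ) :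
    SemiconjBy (intertwiner (ω : S)) ((Int.castRingHom S).mapMatrix (f.coeff n))
      (((ω ^ n : Sˣ) : S) • (Int.castRingHom S).mapMatrix (f.coeff n)) := by
  obtain ⟨c, c', a, b, h0, h1, h2, -⟩ := hf
  have hω3 : ω ^ 3 = 1 := Units.ext (by push_cast; linear_combination ((ω : S) - 1) * hω)
  rw [zpow_eq_zpow_emod n (n := 3) (by exact_mod_cast hω3)]
  rcases (by omega : n % 3 = 0 ∨ n % 3 = 1 ∨ n % 3 = 2) with h | h | h
  · rw [h0 n h, h, zpow_zero, Units.val_one, one_smul, map_add, map_zsmul, map_zsmul, map_one]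
    exact ((SemiconjBy.one_right _).smul_right _).add_right
      ((commute_intertwiner_XYX _).smul_right _)
  · rw [h1 n h, h, zpow_one, map_zsmul, smul_comm]
    exact (semiconjBy_intertwiner_X_add_Y hω).smul_right _
  · rw [h2 n h, h, map_zsmul, smul_comm]
    exact_mod_cast (semiconjBy_intertwiner_Xinv_add_Yinv hω).smul_right (b n)

theorem coeff_toMat_apply (f : L) (i j : Fin 3) (n : ℤ) : (toMat f i j).coeff n = f.coeff n i j :=
  rfl

theorem semiconjBy_scale_toMat {V : Matrix (Fin 3) (Fin 3) S} {z : Sˣ} {f : L}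
    (h : ∀ n, SemiconjBy V ((Int.castRingHom S).mapMatrix (f.coeff n))
      (((z ^ n : Sˣ) : S) • (Int.castRingHom S).mapMatrix (f.coeff n))) :
    SemiconjBy (C.mapMatrix V) ((scale (Int.castRingHom S) 1).mapMatrix (toMat f))
      ((scale (Int.castRingHom S) z).mapMatrix (toMat f)) := by
  ext i k n
  have hik := congrFun₂ (h n).eq i k
  simp only [Matrix.mul_apply, Matrix.smul_apply, RingHom.mapMatrix_apply, Matrix.map_apply,
    eq_intCast, smul_eq_mul] at hik
  simp only [Matrix.mul_apply, AddMonoidAlgebra.coeff_sum, Finset.sum_apply',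
    RingHom.mapMatrix_apply, Matrix.map_apply, mul_comm _ (C _), ← smul_eq_C_mul,
    AddMonoidAlgebra.coeff_smul_apply, coeff_scale, coeff_toMat_apply, eq_intCast, one_zpow,
    Units.val_one, mul_one, smul_eq_mul]
  rw [hik]
  exact Finset.sum_congr rfl fun j _ => by ring

end Twin

/-- If `f` is a twin Laurent polynomial, regarded as a 3×3 matrix over `ℤ[t,t⁻¹]`, then its
determinant is a Laurent polynomial in `t³`: every exponent with nonzero coefficient is
divisible by 3. -/
theorem stmt_19 (f : L) (hf : IsTwin f) :
    ∀ n : ℤ, (toMat f).det.coeff n ≠ 0 → (3 : ℤ) ∣ n := by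
  intro n hn
  obtain ⟨ω, hprim⟩ : ∃ ω : ℂˣ, IsPrimitiveRoot (ω : ℂ) 3 :=
    ⟨_, IsPrimitiveRoot.coe_units_iff.mpr
      ((Complex.isPrimitiveRoot_exp 3 (by norm_num)).isUnit_unit (by norm_num))⟩
  have hω : (ω : ℂ) ^ 2 + ω + 1 = 0 := by
    have hsum := hprim.geom_sum_eq_zero (by norm_num)
    simp only [sum_range_succ, sum_range_zero, pow_zero, pow_one] at hsum
    linear_combination hsum
  have hV : IsUnit (C.mapMatrix (intertwiner (ω : ℂ))).det := by
    rw [← RingHom.map_det, det_intertwiner hω]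
    exact (Ne.isUnit (by norm_num)).map C
  have hdet := Matrix.det_eq_of_semiconjBy
    (semiconjBy_scale_toMat (hf.semiconjBy_intertwiner_coeff hω)) hV
  rw [← RingHom.map_det, ← RingHom.map_det] at hdet
  have hωn := zpow_eq_one_of_scale_eq hdet (by simpa using hn)
  rw [Units.val_zpow_eq_zpow_val] at hωn
  exact_mod_cast (hprim.zpow_eq_one_iff_dvd n).mp hωn
end
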